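/- arXiv:1603.07656 — 4 statements merged into one kernel-verified Lean document; each statement's English description precedes it below -/
import Mathlib

section
/- Let M be an n×n integer matrix, v a nonzero vector in Z^n, and suppose the span of {v, Mv, ..., M^{n-1}v} has dimension r < n. Then there exists a unimodular integer matrix B (det B = ±1) such that Bv = (x_1, ..., x_r, 0, ..., 0)^t for some integers x_i, and BMB^{-1} is block upper triangular of the form [[M_1, C],[0, M_2]] with M_1 an r×r integer matrix, M_2 an (n-r)×(n-r) integer matrix, and C an r×(n-r) integer matrix. -/
/-!
The `ℤ`-span `L` of the Krylov vectors `v, Mv, …, M^{n-1}v` contains `v`, is `M`-stable by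
Cayley–Hamilton, and has `ℤ`-rank equal to the `ℚ`-rank `r` of the same vectors. Take a Smith
normal form basis `(b_i)` of `ℤ^n` adapted to `L`: `L` lies in the span of `r` of the `b_i`, and
`M` maps each of these `r` vectors back into their span, because a nonzero multiple `a_i b_i` lies
in `L` and `ℤ` has no zero divisors. Listing those `r` vectors first, the change of basis to
`(b_i)` is the required unimodular `B`.
-/

open Matrix

open Module Submodule in
theorem finrank_span_image_eq_finrank_span {R K M V : Type*} [CommRing R] [IsDomain R] [Field K]
    [Algebra R K] [IsFractionRing R K] [AddCommGroup M] [Module R M] [AddCommGroup V] [Module R V]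
    [Module K V] [IsScalarTower R K V] {f : M →ₗ[R] V} (hf : Function.Injective f) (s : Set M)
    [Free R (span R s)] [Module.Finite R (span R s)] :
    finrank K (span K (f '' s)) = finrank R (span R s) := by
  let b := Free.chooseBasis R (span R s)
  have hli : LinearIndependent K (f ∘ (span R s).subtype ∘ b) :=
    (LinearIndependent.iff_fractionRing R K).mp <|
      b.linearIndependent.map' _ (ker_subtype _) |>.map' f (LinearMap.ker_eq_bot.mpr hf)
  have hspan : span R (Set.range ((span R s).subtype ∘ b)) = span R s := by
    rw [Set.range_comp, ← map_span, b.span_eq, Submodule.map_top, range_subtype]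
  have hK : ∀ X : Set M, span K (f '' X) = span K (map f (span R X) : Set V) := fun X => by
    rw [map_span, span_span_of_tower]
  rw [finrank_eq_card_basis b, ← finrank_span_eq_card hli, Set.range_comp, hK, hK, hspan]

theorem Matrix.pow_mulVec_mem_span_pow_mulVec {R ι : Type*} [CommRing R] [Nontrivial R]
    [Fintype ι] [DecidableEq ι] (A : Matrix ι ι R) (w : ι → R) {d : ℕ} (hd : Fintype.card ι ≤ d)
    (k : ℕ) : A ^ k *ᵥ w ∈ Submodule.span R (Set.range fun j : Fin d => A ^ (j : ℕ) *ᵥ w) := by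
  rcases isEmpty_or_nonempty ι with hι | hι
  · rw [Subsingleton.elim (A ^ k *ᵥ w) 0]
    exact zero_mem _
  have hne : A.charpoly ≠ 1 := fun h => Fintype.card_ne_zero <| by
    rw [← A.charpoly_natDegree_eq_dim, h, Polynomial.natDegree_one]
  have hdeg : (Polynomial.X ^ k %ₘ A.charpoly).natDegree < d :=
    (Polynomial.natDegree_modByMonic_lt _ A.charpoly_monic hne).trans_le
      (A.charpoly_natDegree_eq_dim ▸ hd)
  rw [pow_eq_aeval_mod_charpoly, Polynomial.aeval_eq_sum_range' hdeg, sum_mulVec]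
  refine Submodule.sum_mem _ fun i hi => ?_
  rw [smul_mulVec]
  exact Submodule.smul_mem _ _ (Submodule.subset_span ⟨⟨i, Finset.mem_range.mp hi⟩, rfl⟩)

theorem Matrix.mulVec_mem_span_pow_mulVec {R ι : Type*} [CommRing R] [Nontrivial R] [Fintype ι]
    [DecidableEq ι] (A : Matrix ι ι R) (w : ι → R) {d : ℕ} (hd : Fintype.card ι ≤ d) {x : ι → R}
    (hx : x ∈ Submodule.span R (Set.range fun j : Fin d => A ^ (j : ℕ) *ᵥ w)) :
    A *ᵥ x ∈ Submodule.span R (Set.range fun j : Fin d => A ^ (j : ℕ) *ᵥ w) := by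
  refine (Submodule.span_le (p := (Submodule.span R _).comap A.mulVecLin)).mpr ?_ hx
  rintro _ ⟨j, rfl⟩
  rw [SetLike.mem_coe, Submodule.mem_comap, mulVecLin_apply, mulVec_mulVec, ← pow_succ']
  exact A.pow_mulVec_mem_span_pow_mulVec w hd _

theorem Module.Basis.SmithNormalForm.repr_apply_embedding_eq_zero {R M ι : Type*} [CommRing R]
    [IsDomain R] [AddCommGroup M] [Module R M] {m : ℕ} {N : Submodule R M}
    (snf : Basis.SmithNormalForm N ι m) {φ : M →ₗ[R] M} (hφ : ∀ x ∈ N, φ x ∈ N) (k : Fin m)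
    {i : ι} (hi : i ∉ Set.range snf.f) : snf.bM.repr (φ (snf.bM (snf.f k))) i = 0 := by
  have ha : snf.a k ≠ 0 := fun h => snf.bN.ne_zero k <| by
    rw [← Submodule.coe_eq_zero, snf.snf k, h, zero_smul]
  have h : snf.bM.coord i (φ (snf.bN k)) = 0 :=
    snf.le_ker_coord_of_notMem_range hi (hφ _ (snf.bN k).2)
  rw [snf.snf k, map_smul, map_smul, Basis.coord_apply, smul_eq_mul] at h
  exact (mul_eq_zero.mp h).resolve_left ha

theorem Module.Basis.toMatrix_piBasisFun_mulVec {R ι : Type*} [CommRing R] [Fintype ι]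
    [DecidableEq ι] (b : Basis ι R (ι → R)) (v : ι → R) :
    b.toMatrix (Pi.basisFun R ι) *ᵥ v = b.repr v :=
  (Pi.basisFun R ι).toMatrix_mulVec_repr b v

theorem Module.Basis.toMatrix_piBasisFun_mul_mul {R ι : Type*} [CommRing R] [Fintype ι]
    [DecidableEq ι] (b : Basis ι R (ι → R)) (A : Matrix ι ι R) :
    b.toMatrix (Pi.basisFun R ι) * A * (Pi.basisFun R ι).toMatrix b =
      LinearMap.toMatrix b b (Matrix.toLin' A) := by
  rw [← basis_toMatrix_mul_linearMap_toMatrix_mul_basis_toMatrix b (Pi.basisFun R ι) b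
      (Pi.basisFun R ι),
    LinearMap.toMatrix_eq_toMatrix', LinearMap.toMatrix'_toLin']

open Finset in
theorem Finset.exists_equiv_fin_mem_iff_lt {n : ℕ} (s : Finset (Fin n)) :
    ∃ e : Fin n ≃ Fin n, ∀ i, e i ∈ s ↔ (i : ℕ) < #s := by
  have hcard : #s + #sᶜ = n := by rw [card_add_card_compl, Fintype.card_fin]
  refine ⟨(finCongr hcard.symm).trans (finSumFinEquiv.symm.trans (finSumEquivOfFinset rfl rfl)),
    fun i => ?_⟩
  obtain ⟨x, hx⟩ : ∃ x, finSumFinEquiv x = finCongr hcard.symm i := ⟨_, Equiv.apply_symm_apply _ _⟩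
  simp only [Equiv.trans_apply, ← hx, Equiv.symm_apply_apply]
  replace hx : (finSumFinEquiv x : ℕ) = i := congrArg Fin.val hx
  rcases x with x | x
  · simp only [finSumFinEquiv_apply_left, Fin.val_castAdd] at hx
    simp [finSumEquivOfFinset_inl, ← hx]
  · simp only [finSumFinEquiv_apply_right, Fin.val_natAdd] at hx
    simpa [finSumEquivOfFinset_inr, ← hx] using mem_compl.mp (sᶜ.orderEmbOfFin_mem rfl x)

theorem Module.Basis.SmithNormalForm.exists_blockTriangular {R : Type*} [CommRing R] [IsDomain R]
    {n m : ℕ} {N : Submodule R (Fin n → R)} (snf : Basis.SmithNormalForm N (Fin n) m)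
    {A : Matrix (Fin n) (Fin n) R} (hA : ∀ x ∈ N, A *ᵥ x ∈ N) {v : Fin n → R} (hv : v ∈ N) :
    ∃ B B' : Matrix (Fin n) (Fin n) R, B * B' = 1 ∧ B' * B = 1 ∧
      (∀ i : Fin n, m ≤ (i : ℕ) → (B *ᵥ v) i = 0) ∧
      (∀ i j : Fin n, m ≤ (i : ℕ) → (j : ℕ) < m → (B * A * B') i j = 0) := by
  obtain ⟨e, he⟩ := (Finset.univ.map snf.f).exists_equiv_fin_mem_iff_lt
  have hrange : ∀ i, e i ∈ Set.range snf.f ↔ (i : ℕ) < m := fun i => by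
    simpa using he i
  set b := snf.bM.reindex e.symm
  have hb : ∀ x i, b.repr x i = snf.bM.repr x (e i) := fun x i => by
    simp [b]
  refine ⟨b.toMatrix (Pi.basisFun R _), (Pi.basisFun R _).toMatrix b,
    b.toMatrix_mul_toMatrix_flip _, Basis.toMatrix_mul_toMatrix_flip _ b,
    fun i hi => ?_, fun i j hi hj => ?_⟩
  · rw [b.toMatrix_piBasisFun_mulVec, hb]
    exact snf.repr_eq_zero_of_notMem_range ⟨v, hv⟩ (by simpa [hrange] using hi)
  · obtain ⟨k, hk⟩ := (hrange j).mpr hj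
    rw [b.toMatrix_piBasisFun_mul_mul, LinearMap.toMatrix_apply, hb]
    simp only [b, Basis.reindex_apply, Equiv.symm_symm, ← hk]
    exact snf.repr_apply_embedding_eq_zero (φ := Matrix.toLin' A) hA k
      (by simpa [hrange] using hi)

theorem stmt_1_general (n r : ℕ) (M : Matrix (Fin n) (Fin n) ℤ)
    (v : Fin n → ℤ)
    (hrank : Module.finrank ℚ (Submodule.span ℚ
      (Set.range (fun j : Fin n => fun i : Fin n => (((M ^ (j : ℕ)) *ᵥ v) i : ℚ)))) = r) :
    ∃ B B' : Matrix (Fin n) (Fin n) ℤ,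
      (B.det = 1 ∨ B.det = -1) ∧ B * B' = 1 ∧ B' * B = 1 ∧
      (∀ i : Fin n, r ≤ (i : ℕ) → (B *ᵥ v) i = 0) ∧
      (∀ i j : Fin n, r ≤ (i : ℕ) → (j : ℕ) < r → (B * M * B') i j = 0) := by
  set L := Submodule.span ℤ (Set.range fun j : Fin n => M ^ (j : ℕ) *ᵥ v)
  have hcard : Fintype.card (Fin n) ≤ n := (Fintype.card_fin n).le
  have hML : ∀ x ∈ L, M *ᵥ x ∈ L := fun x => M.mulVec_mem_span_pow_mulVec v hcard
  have hvL : v ∈ L := by simpa using M.pow_mulVec_mem_span_pow_mulVec v hcard 0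
  obtain ⟨m, snf⟩ := L.smithNormalForm (Pi.basisFun ℤ (Fin n))
  have hm : m = r := by
    let ι : (Fin n → ℤ) →ₗ[ℤ] (Fin n → ℚ) := LinearMap.compLeft (Algebra.linearMap ℤ ℚ) (Fin n)
    have hι : Function.Injective ι := fun x y h => funext fun i => Int.cast_injective (congrFun h i)
    have hrank_set : (Set.range fun j : Fin n => fun i => ((M ^ (j : ℕ) *ᵥ v) i : ℚ)) =
        ι '' Set.range fun j : Fin n => M ^ (j : ℕ) *ᵥ v :=
      Set.range_comp ι fun j : Fin n => M ^ (j : ℕ) *ᵥ v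
    rw [← hrank, hrank_set, finrank_span_image_eq_finrank_span hι,
      Module.finrank_eq_card_basis snf.bN, Fintype.card_fin]
  subst hm
  obtain ⟨B, B', hBB', hB'B, hBv, hBMB'⟩ := snf.exists_blockTriangular hML hvL
  exact ⟨B, B', Int.isUnit_iff.mp (isUnit_det_of_right_inverse hBB'), hBB', hB'B, hBv, hBMB'⟩

/-- If `M ∈ M_n(ℤ)`, `v ∈ ℤ^n \ {0}` and the span of
`{v, Mv, …, M^{n-1}v}` over `ℚ` has dimension `r < n`, then there is a unimodular
integer matrix `B` with `Bv = (x_1, …, x_r, 0, …, 0)ᵗ` and `B M B⁻¹` block upper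
triangular with an `r × r` block `M_1`, an `(n-r) × (n-r)` block `M_2` and an
`r × (n-r)` block `C`. -/
theorem stmt_1 (n r : ℕ) (M : Matrix (Fin n) (Fin n) ℤ)
    (v : Fin n → ℤ) (hv : v ≠ 0) (hrn : r < n)
    (hrank : Module.finrank ℚ (Submodule.span ℚ
      (Set.range (fun j : Fin n => fun i : Fin n => (((M ^ (j : ℕ)) *ᵥ v) i : ℚ)))) = r) :
    ∃ B B' : Matrix (Fin n) (Fin n) ℤ,
      (B.det = 1 ∨ B.det = -1) ∧ B * B' = 1 ∧ B' * B = 1 ∧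
      (∀ i : Fin n, r ≤ (i : ℕ) → (B *ᵥ v) i = 0) ∧
      (∀ i j : Fin n, r ≤ (i : ℕ) → (j : ℕ) < r → (B * M * B') i j = 0) :=
  stmt_1_general n r M v hrank
end

section
/- Let M ∈ M_n(Z) be invertible, D, S ⊂ Z^n finite sets of the same cardinality q, and B ∈ M_n(Z) an invertible integer matrix such that B^{-1}D ⊂ Z^n. If the matrix H = (1/√q)[e^{2πi⟨M^{-1}d, s⟩}]_{d∈D, s∈S} is unitary, then so is H̃ = (1/√q)[e^{2πi⟨M̃^{-1}d̃, s̃⟩}]_{d̃∈D̃, s̃∈S̃}, where M̃ = B^{-1}MB, D̃ = B^{-1}D, and S̃ = B^* S. -/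
/-! The two matrices are equal entrywise: `(B⁻¹MB)⁻¹B⁻¹d = B⁻¹M⁻¹d`, and
`⟨B⁻¹x, Bᵀs⟩ = ⟨x, s⟩`, so every phase `⟨M̃⁻¹d̃, s̃⟩` equals `⟨M⁻¹d, s⟩`. -/

open Matrix Complex

section

variable {ι : Type*} [Fintype ι] [DecidableEq ι]

theorem isUnit_det_intCast_map_of_det_ne_zero {K L : Type*} [Field K] [CharZero K] [Field L]
    [CharZero L] {B : Matrix ι ι ℤ} (hB : (B.map (Int.cast : ℤ → K)).det ≠ 0) :
    IsUnit (B.map (Int.cast : ℤ → L)).det := by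
  rw [← Int.cast_det] at hB ⊢
  exact isUnit_iff_ne_zero.mpr (Int.cast_ne_zero.mpr (Int.cast_ne_zero.mp hB))

variable {R : Type*} [CommRing R] {B : Matrix ι ι R}

theorem inv_conj_mulVec_inv_mulVec (hB : IsUnit B.det) (A : Matrix ι ι R) (v : ι → R) :
    (B⁻¹ * A * B)⁻¹ *ᵥ (B⁻¹ *ᵥ v) = B⁻¹ *ᵥ (A⁻¹ *ᵥ v) := by
  rw [Matrix.mul_inv_rev, Matrix.mul_inv_rev, nonsing_inv_nonsing_inv B hB, mulVec_mulVec,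
    mul_assoc, mul_assoc, mul_nonsing_inv B hB, mul_one, ← mulVec_mulVec]

theorem inv_mulVec_dotProduct_transpose_mulVec (hB : IsUnit B.det) (x y : ι → R) :
    (B⁻¹ *ᵥ x) ⬝ᵥ (Bᵀ *ᵥ y) = x ⬝ᵥ y := by
  rw [dotProduct_mulVec, vecMul_transpose, mulVec_mulVec, mul_nonsing_inv B hB, one_mulVec]

theorem inv_conj_mulVec_dotProduct_transpose_mulVec (hB : IsUnit B.det) (A : Matrix ι ι R)
    (d s : ι → R) :
    ((B⁻¹ * A * B)⁻¹ *ᵥ (B⁻¹ *ᵥ d)) ⬝ᵥ (Bᵀ *ᵥ s) = (A⁻¹ *ᵥ d) ⬝ᵥ s := by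
  rw [inv_conj_mulVec_inv_mulVec hB, inv_mulVec_dotProduct_transpose_mulVec hB]

end

theorem stmt_11_general (n q : ℕ) (M B : Matrix (Fin n) (Fin n) ℤ)
    (hB : (B.map (Int.cast : ℤ → ℚ)).det ≠ 0)
    (D S : Finset (Fin n → ℤ))
    (H : Matrix {d // d ∈ D} {s // s ∈ S} ℂ)
    (hH : ∀ (d : {d // d ∈ D}) (s : {s // s ∈ S}), H d s =
      (1 / Real.sqrt q : ℝ) * Complex.exp (2 * Real.pi * Complex.I *
        (∑ i : Fin n, ((M.map (Int.cast : ℤ → ℂ))⁻¹ *ᵥ (fun t => ((d : Fin n → ℤ) t : ℂ))) i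
          * ((s : Fin n → ℤ) i : ℂ))))
    (hUnitary : H.conjTranspose * H = 1)
    (Ht : Matrix {d // d ∈ D} {s // s ∈ S} ℂ)
    (hHt : ∀ (d : {d // d ∈ D}) (s : {s // s ∈ S}), Ht d s =
      (1 / Real.sqrt q : ℝ) * Complex.exp (2 * Real.pi * Complex.I *
        (∑ i : Fin n,
          (((B.map (Int.cast : ℤ → ℂ))⁻¹ * (M.map (Int.cast : ℤ → ℂ))
              * (B.map (Int.cast : ℤ → ℂ)))⁻¹ *ᵥ
            ((B.map (Int.cast : ℤ → ℂ))⁻¹ *ᵥ (fun t => ((d : Fin n → ℤ) t : ℂ)))) i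
          * (((B.map (Int.cast : ℤ → ℂ)).transpose *ᵥ (fun t => ((s : Fin n → ℤ) t : ℂ))) i)))) :
    Ht.conjTranspose * Ht = 1 := by
  have hBC := isUnit_det_intCast_map_of_det_ne_zero (L := ℂ) hB
  have hHt_eq : Ht = H := by
    ext d s
    rw [hHt d s, hH d s]
    exact congrArg _ (congrArg (fun z => exp (2 * Real.pi * I * z))
      (inv_conj_mulVec_dotProduct_transpose_mulVec hBC _ _ _))
  rwa [hHt_eq]

/-- If `(M, D, S)` is a Hadamard triple (i.e. the matrix
`H = (1/√q)[e^{2πi⟨M⁻¹d, s⟩}]` is unitary) and `B` is an invertible integer matrix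
with `B⁻¹D ⊂ ℤ^n`, then the conjugate triple `(B⁻¹MB, B⁻¹D, BᵀS)` is also a
Hadamard triple. -/
theorem stmt_11 (n q : ℕ) (M B : Matrix (Fin n) (Fin n) ℤ)
    (hM : (M.map (Int.cast : ℤ → ℚ)).det ≠ 0)
    (hB : (B.map (Int.cast : ℤ → ℚ)).det ≠ 0)
    (D S : Finset (Fin n → ℤ)) (hDq : D.card = q) (hSq : S.card = q)
    (hBD : ∀ d ∈ D, ∃ w : Fin n → ℤ,
      (B.map (Int.cast : ℤ → ℚ))⁻¹ *ᵥ (fun i => (d i : ℚ)) = fun i => (w i : ℚ))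
    (H : Matrix {d // d ∈ D} {s // s ∈ S} ℂ)
    (hH : ∀ (d : {d // d ∈ D}) (s : {s // s ∈ S}), H d s =
      (1 / Real.sqrt q : ℝ) * Complex.exp (2 * Real.pi * Complex.I *
        (∑ i : Fin n, ((M.map (Int.cast : ℤ → ℂ))⁻¹ *ᵥ (fun t => ((d : Fin n → ℤ) t : ℂ))) i
          * ((s : Fin n → ℤ) i : ℂ))))
    (hUnitary : H.conjTranspose * H = 1)
    (Ht : Matrix {d // d ∈ D} {s // s ∈ S} ℂ)
    (hHt : ∀ (d : {d // d ∈ D}) (s : {s // s ∈ S}), Ht d s =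
      (1 / Real.sqrt q : ℝ) * Complex.exp (2 * Real.pi * Complex.I *
        (∑ i : Fin n,
          (((B.map (Int.cast : ℤ → ℂ))⁻¹ * (M.map (Int.cast : ℤ → ℂ))
              * (B.map (Int.cast : ℤ → ℂ)))⁻¹ *ᵥ
            ((B.map (Int.cast : ℤ → ℂ))⁻¹ *ᵥ (fun t => ((d : Fin n → ℤ) t : ℂ)))) i
          * (((B.map (Int.cast : ℤ → ℂ)).transpose *ᵥ (fun t => ((s : Fin n → ℤ) t : ℂ))) i)))) :
    Ht.conjTranspose * Ht = 1 :=
  stmt_11_general n q M B hB D S H hH hUnitary Ht hHt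
end

section
/- Let M̃ be the n×n integer matrix with M̃ e_j = e_{j-1} for 2 ≤ j ≤ n and M̃ e_1 = -c e_n (the companion matrix of x^n + c), and let Z_0 = {ξ ∈ R^n : ξ_n = k + i/q for some k ∈ Z, 1 ≤ i ≤ q-1}. If gcd(q, c) = 1, then (M̃^*)^n (Z_0) ⊆ Z_0. -/
open Matrix

/-!
`M̃` is a twisted cyclic shift of the coordinates (one wrap-around picks up the factor `-c`), so
`M̃ⁿ = -c • 1`, and hence `(M̃ᵀ)ⁿ ξ = -c ξ`. Writing `ξₙ = a / q` with `q ∤ a`, multiplication by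
`-c` keeps `q ∤ -c a` because `q` and `c` are coprime.
-/

section Companion

variable {R : Type*} [Ring R] {n : ℕ}

/-- The companion matrix of `X ^ n + c`, in the convention `M e_j = e_{j-1}`. -/
def companion (n : ℕ) (c : R) : Matrix (Fin n) (Fin n) R :=
  Matrix.of fun i j =>
    if (j : ℕ) = 0 then (if (i : ℕ) = n - 1 then -c else 0)
    else if (i : ℕ) + 1 = (j : ℕ) then 1 else 0

lemma mul_companion_apply_of_eq_zero (A : Matrix (Fin n) (Fin n) R) (c : R) (i j : Fin n)
    (hj : (j : ℕ) = 0) : (A * companion n c) i j = A i ⟨n - 1, by omega⟩ * -c := by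
  rw [mul_apply, Finset.sum_eq_single ⟨n - 1, by omega⟩]
  · simp [companion, hj]
  · intro l _ hl
    have : (l : ℕ) ≠ n - 1 := fun h => hl (Fin.ext h)
    simp [companion, hj, this]
  · simp

lemma mul_companion_apply_of_ne_zero (A : Matrix (Fin n) (Fin n) R) (c : R) (i j : Fin n)
    (hj : (j : ℕ) ≠ 0) : (A * companion n c) i j = A i ⟨j - 1, by omega⟩ := by
  rw [mul_apply, Finset.sum_eq_single ⟨j - 1, by omega⟩]
  · simp [companion, hj, show (j : ℕ) - 1 + 1 = j by omega]
  · intro l _ hl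
    have : (l : ℕ) + 1 ≠ j := fun h => hl (Fin.ext (by simp; omega))
    simp [companion, hj, this]
  · simp

lemma companion_pow_apply (c : R) {k : ℕ} (hk : k ≤ n) (i j : Fin n) :
    (companion n c ^ k) i j =
      if k ≤ (j : ℕ) then (if (i : ℕ) + k = j then 1 else 0)
      else (if (i : ℕ) + k = n + j then -c else 0) := by
  induction k generalizing j with
  | zero => simp [one_apply, Fin.ext_iff]
  | succ k ih =>
    rw [pow_succ]
    by_cases hj : (j : ℕ) = 0
    · rw [mul_companion_apply_of_eq_zero _ _ _ _ hj, ih (by omega)]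
      dsimp only
      rw [if_pos (show k ≤ n - 1 by omega), if_neg (show ¬k + 1 ≤ (j : ℕ) by omega)]
      have hwrap : (i : ℕ) + k = n - 1 ↔ (i : ℕ) + (k + 1) = n + j := by omega
      simp only [hwrap]
      split_ifs <;> simp
    · rw [mul_companion_apply_of_ne_zero _ _ _ _ hj, ih (by omega)]
      dsimp only
      split_ifs <;> first | rfl | omega

lemma companion_pow_self (c : R) : companion n c ^ n = (-c) • (1 : Matrix (Fin n) (Fin n) R) := by
  ext i j
  rw [companion_pow_apply c le_rfl, Matrix.smul_apply, one_apply]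
  simp [Fin.ext_iff, add_comm (i : ℕ) n]

end Companion

section Fractions

variable {q : ℤ}

lemma exists_int_add_div_of_not_dvd (hq : 0 < q) {a : ℤ} (ha : ¬ q ∣ a) :
    ∃ k i : ℤ, 1 ≤ i ∧ i ≤ q - 1 ∧ (a : ℝ) / q = k + i / q := by
  have hi : a % q ≠ 0 := fun h => ha (Int.dvd_of_emod_eq_zero h)
  have hi0 : 0 ≤ a % q := Int.emod_nonneg a hq.ne'
  have hiq : a % q < q := Int.emod_lt_of_pos a hq
  refine ⟨a / q, a % q, by omega, by omega, ?_⟩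
  have hq' : (q : ℝ) ≠ 0 := by positivity
  rw [div_eq_iff hq', add_mul, div_mul_cancel₀ _ hq']
  exact_mod_cast (Int.ediv_mul_add_emod a q).symm

lemma exists_int_add_div_mul {m k i : ℤ} (hm : IsCoprime q m) (hi₁ : 1 ≤ i) (hi₂ : i ≤ q - 1) :
    ∃ k' i' : ℤ, 1 ≤ i' ∧ i' ≤ q - 1 ∧ (m : ℝ) * (k + i / q) = k' + i' / q := by
  have hq : 0 < q := by omega
  have hndvd : ¬ q ∣ m * (k * q + i) := by
    intro h
    have hdvd : q ∣ i := (dvd_add_right (dvd_mul_left q k)).mp (hm.dvd_of_dvd_mul_left h)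
    have := Int.le_of_dvd (by omega) hdvd
    omega
  have hq' : (q : ℝ) ≠ 0 := by positivity
  convert exists_int_add_div_of_not_dvd hq hndvd using 5
  push_cast
  field_simp

end Fractions

/-- Let `M̃` be the companion matrix of `x^n + c`
(`M̃ e_j = e_{j-1}` for `j ≥ 2`, `M̃ e_1 = -c e_n`), and
`Z_0 = {ξ ∈ ℝ^n : ξ_n = k + i/q, k ∈ ℤ, 1 ≤ i ≤ q-1}`. If `gcd(q, c) = 1`
then `(M̃ᵀ)^n (Z_0) ⊆ Z_0`. -/
theorem stmt_13 (n : ℕ) (hn : 0 < n) (q c : ℤ)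
    (hgcd : IsCoprime q c)
    (Mt : Matrix (Fin n) (Fin n) ℤ)
    (hM : ∀ i j : Fin n, Mt i j =
      (if (j : ℕ) = 0 then (if (i : ℕ) = n - 1 then -c else 0)
       else if (i : ℕ) + 1 = (j : ℕ) then 1 else 0))
    (Z0 : Set (Fin n → ℝ))
    (hZ0 : Z0 = {ξ : Fin n → ℝ | ∃ k i : ℤ, 1 ≤ i ∧ i ≤ q - 1 ∧
      ξ ⟨n - 1, by omega⟩ = (k : ℝ) + (i : ℝ) / (q : ℝ)}) :
    (fun ξ : Fin n → ℝ => ((Mt.transpose ^ n).map (Int.cast : ℤ → ℝ)) *ᵥ ξ) '' Z0 ⊆ Z0 := by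
  have hMt : Mt = companion n c := Matrix.ext hM
  have hpow : (Mt.transpose ^ n).map (Int.cast : ℤ → ℝ) = ((-c : ℤ) : ℝ) • 1 := by
    rw [hMt, ← transpose_pow, companion_pow_self, transpose_smul, transpose_one]
    ext i j
    simp only [map_apply, Matrix.smul_apply, one_apply, smul_eq_mul]
    split_ifs <;> simp
  subst hZ0
  rintro _ ⟨ξ, ⟨k, i, hi1, hi2, hξ⟩, rfl⟩
  simp only [Set.mem_ofPred_eq, hpow, smul_mulVec, one_mulVec, Pi.smul_apply, smul_eq_mul, hξ]
  exact exists_int_add_div_mul hgcd.neg_right hi1 hi2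
end

section
/- Let M ∈ M_2(Z) be an expanding integer matrix (all eigenvalues of modulus > 1) and v ∈ Z^2 \ {0} an eigenvector of M with integer eigenvalue ℓ, i.e. Mv = ℓv. Then |ℓ| ≥ 2, and if an integer q ≥ 2 divides ℓ and u ∈ Z^2 satisfies ⟨v, u⟩ = ℓ/q, then (M, {0,...,q-1}v, {0,...,q-1}u) is a Hadamard triple. -/
open Matrix Complex

/-- Let `M ∈ M_2(ℤ)` be expanding, `v ∈ ℤ^2 \ {0}` with `Mv = ℓv`,
`ℓ ∈ ℤ`, `q ≥ 2`, `q ∣ ℓ`, and `u ∈ ℤ^2` with `⟨v, u⟩ = ℓ/q`. Then `|ℓ| ≥ 2`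
and `(M, {0,…,q-1}v, {0,…,q-1}u)` is a Hadamard triple, i.e. the matrix
`(1/√q)[e^{2πi⟨M⁻¹(kv), ju⟩}]_{k,j}` is unitary. -/
theorem stmt_14 (M : Matrix (Fin 2) (Fin 2) ℤ)
    (hexp : ∀ z : ℂ, ((M.map (Int.cast : ℤ → ℂ)).charpoly).IsRoot z → 1 < ‖z‖)
    (v : Fin 2 → ℤ) (hv : v ≠ 0) (l : ℤ) (hev : M *ᵥ v = l • v)
    (q : ℕ) (hq : 2 ≤ q) (hql : (q : ℤ) ∣ l)
    (u : Fin 2 → ℤ) (hu : (∑ i : Fin 2, v i * u i) * (q : ℤ) = l)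
    (H : Matrix (Fin q) (Fin q) ℂ)
    (hH : ∀ k j : Fin q, H k j =
      (1 / Real.sqrt q : ℝ) * Complex.exp (2 * Real.pi * Complex.I *
        (∑ i : Fin 2, ((M.map (Int.cast : ℤ → ℂ))⁻¹ *ᵥ
            (fun t => ((k : ℕ) : ℂ) * (v t : ℂ))) i * (((j : ℕ) : ℂ) * (u i : ℂ))))) :
    2 ≤ |l| ∧ H.conjTranspose * H = 1 := by
  set Mc := M.map (Int.cast : ℤ → ℂ) with hMcdef
  have hq0 : (0:ℕ) < q := by omega
  have hqR : (0:ℝ) < q := by exact_mod_cast hq0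
  have hqC : (q:ℂ) ≠ 0 := by exact_mod_cast hq0.ne'
  -- determinant nonzero
  have hdet : Mc.det ≠ 0 := by
    intro h
    have h0 : Mc.charpoly.IsRoot 0 := by
      have := Mc.det_eq_sign_charpoly_coeff
      rw [h] at this
      simp only [Fintype.card_fin, neg_one_sq, one_mul] at this
      simpa [Polynomial.IsRoot, Polynomial.coeff_zero_eq_eval_zero] using this.symm
    have := hexp 0 h0
    norm_num at this
  have hvC : (fun t => (v t : ℂ)) ≠ 0 := by
    intro h
    apply hv
    funext t
    have ht := congrFun h t
    simp only [Pi.zero_apply] at ht ⊢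
    exact_mod_cast ht
  -- eigenvector equation over ℂ
  have hMv : Mc *ᵥ (fun t => (v t : ℂ)) = (l:ℂ) • (fun t => (v t : ℂ)) := by
    funext i
    have hZ : ∑ j, M i j * v j = l * v i := by
      have := congrFun hev i
      simpa [Matrix.mulVec, dotProduct] using this
    have : ((∑ j, M i j * v j : ℤ) : ℂ) = ((l * v i : ℤ) : ℂ) := by exact_mod_cast hZ
    push_cast at this
    simpa [hMcdef, Matrix.mulVec, dotProduct, Matrix.map_apply] using this
  -- l ≠ 0
  have hl : l ≠ 0 := by
    intro h0
    subst h0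
    apply hdet
    rw [← Matrix.exists_mulVec_eq_zero_iff]
    refine ⟨_, hvC, ?_⟩
    simpa using hMv
  have hlC : (l:ℂ) ≠ 0 := by exact_mod_cast hl
  -- inverse eigenvector equation
  have hinv : Mc⁻¹ *ᵥ (fun t => (v t : ℂ)) = (l:ℂ)⁻¹ • (fun t => (v t : ℂ)) := by
    have h1 : Mc⁻¹ *ᵥ (Mc *ᵥ (fun t => (v t : ℂ))) = fun t => (v t : ℂ) := by
      rw [Matrix.mulVec_mulVec, Matrix.nonsing_inv_mul Mc (isUnit_iff_ne_zero.mpr hdet),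
        Matrix.one_mulVec]
    rw [hMv, Matrix.mulVec_smul] at h1
    calc Mc⁻¹ *ᵥ (fun t => (v t : ℂ))
        = (l:ℂ)⁻¹ • ((l:ℂ) • (Mc⁻¹ *ᵥ fun t => (v t : ℂ))) := by
          rw [smul_smul, inv_mul_cancel₀ hlC, one_smul]
      _ = (l:ℂ)⁻¹ • fun t => (v t : ℂ) := by rw [h1]
  -- the inner product sum
  have huC : ((v 0 : ℂ) * u 0 + (v 1 : ℂ) * u 1) * q = l := by
    have : ((∑ i : Fin 2, v i * u i : ℤ) : ℂ) * q = l := by exact_mod_cast hu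
    simpa [Fin.sum_univ_two] using this
  have hsum : ∀ k j : Fin q,
      (∑ i : Fin 2, (Mc⁻¹ *ᵥ (fun t => ((k:ℕ):ℂ) * (v t : ℂ))) i * (((j:ℕ):ℂ) * (u i : ℂ)))
        = ((k:ℕ):ℂ) * ((j:ℕ):ℂ) / q := by
    intro k j
    have hk : (fun t => ((k:ℕ):ℂ) * (v t : ℂ)) = ((k:ℕ):ℂ) • (fun t => (v t : ℂ)) := rfl
    rw [hk, Matrix.mulVec_smul, hinv]
    simp only [Fin.sum_univ_two, Pi.smul_apply, smul_eq_mul]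
    field_simp
    linear_combination ((k:ℕ):ℂ) * ((j:ℕ):ℂ) * huC
  have hH' : ∀ k j : Fin q, H k j =
      (1 / Real.sqrt q : ℝ) * Complex.exp (2 * Real.pi * Complex.I *
        (((k:ℕ):ℂ) * ((j:ℕ):ℂ) / q)) := by
    intro k j
    rw [hH k j, hsum k j]
  -- part 1
  have part1 : 2 ≤ |l| := by
    have h1 : (q:ℤ) ∣ |l| := (dvd_abs _ _).mpr hql
    have h2 : (q:ℤ) ≤ |l| := Int.le_of_dvd (abs_pos.mpr hl) h1
    have : (2:ℤ) ≤ (q:ℤ) := by exact_mod_cast hq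
    omega
  refine ⟨part1, ?_⟩
  -- unitarity
  have hcc : ((1 / Real.sqrt q : ℝ) : ℂ) * ((1 / Real.sqrt q : ℝ) : ℂ) = 1 / (q:ℂ) := by
    have : (Real.sqrt q) * (Real.sqrt q) = (q:ℝ) := Real.mul_self_sqrt hqR.le
    have h2 : ((1 / Real.sqrt q : ℝ)) * ((1 / Real.sqrt q : ℝ)) = 1 / (q:ℝ) := by
      rw [div_mul_div_comm, one_mul, this]
    calc ((1 / Real.sqrt q : ℝ) : ℂ) * ((1 / Real.sqrt q : ℝ) : ℂ)
        = (((1 / Real.sqrt q : ℝ) * (1 / Real.sqrt q : ℝ) : ℝ) : ℂ) := by push_cast; ring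
      _ = 1 / (q:ℂ) := by rw [h2]; push_cast; ring
  ext a b
  rw [Matrix.mul_apply, Matrix.one_apply]
  have hentry : ∀ k : Fin q,
      (H.conjTranspose a k) * H k b = (1 / (q:ℂ)) *
        Complex.exp (2 * Real.pi * Complex.I * ((((b:ℕ):ℂ) - ((a:ℕ):ℂ)) / q)) ^ (k:ℕ) := by
    intro k
    rw [Matrix.conjTranspose_apply, hH' k a, hH' k b]
    rw [← Complex.exp_nat_mul]
    simp only [star_mul', Complex.star_def, Complex.conj_ofReal, ← Complex.exp_conj]
    have hconj : (starRingEnd ℂ) (2 * Real.pi * Complex.I * (((k:ℕ):ℂ) * ((a:ℕ):ℂ) / q))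
        = -(2 * Real.pi * Complex.I * (((k:ℕ):ℂ) * ((a:ℕ):ℂ) / q)) := by
      simp only [_root_.map_mul, map_div₀, Complex.conj_I, Complex.conj_ofReal,
        map_ofNat, map_natCast]
      ring
    rw [hconj]
    rw [mul_mul_mul_comm, hcc, ← Complex.exp_add]
    congr 1
    ring
  rw [Finset.sum_congr rfl (fun k _ => hentry k), ← Finset.mul_sum]
  set ω := Complex.exp (2 * Real.pi * Complex.I * ((((b:ℕ):ℂ) - ((a:ℕ):ℂ)) / q)) with hω
  have hsum2 : ∑ k : Fin q, ω ^ (k:ℕ) = ∑ k ∈ Finset.range q, ω ^ k :=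
    Fin.sum_univ_eq_sum_range (fun k => ω ^ k) q
  rw [hsum2]
  by_cases hab : a = b
  · subst hab
    have : ω = 1 := by
      rw [hω]
      simp
    rw [this]
    simp [hqC]
  · rw [if_neg hab]
    have hd0 : ((b:ℕ) : ℤ) - ((a:ℕ) : ℤ) ≠ 0 := by
      have : (a:ℕ) ≠ (b:ℕ) := fun h => hab (Fin.ext h)
      omega
    have hdlt : |((b:ℕ) : ℤ) - ((a:ℕ) : ℤ)| < q := by
      have ha := a.isLt
      have hb := b.isLt
      rw [abs_lt]
      omega
    obtain ⟨d, hd⟩ : ∃ d : ℤ, (d : ℂ) = ((b:ℕ):ℂ) - ((a:ℕ):ℂ) :=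
      ⟨((b:ℕ):ℤ) - ((a:ℕ):ℤ), by push_cast; ring⟩
    have hdC : (d:ℂ) ≠ 0 := by
      rw [hd]
      intro h
      apply hd0
      have : ((b:ℕ):ℂ) = ((a:ℕ):ℂ) := by linear_combination h
      have : (b:ℕ) = (a:ℕ) := by exact_mod_cast this
      omega
    have hdZ0 : d ≠ 0 := fun h => hdC (by rw [h]; simp)
    have hdabs : |d| < q := by
      have : (d:ℂ) = (((((b:ℕ):ℤ) - ((a:ℕ):ℤ)):ℤ):ℂ) := by rw [hd]; push_cast; ring
      have hde : d = ((b:ℕ):ℤ) - ((a:ℕ):ℤ) := by exact_mod_cast this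
      rw [hde]; exact hdlt
    have hω1 : ω ≠ 1 := by
      intro hcon
      rw [hω, Complex.exp_eq_one_iff] at hcon
      obtain ⟨n, hn⟩ := hcon
      have h2pi : (2 * (Real.pi:ℂ) * Complex.I) ≠ 0 := by
        simp [Real.pi_ne_zero, Complex.I_ne_zero]
      have hdq : (((b:ℕ):ℂ) - ((a:ℕ):ℂ)) / q = n := by
        have : (2 * (Real.pi:ℂ) * Complex.I) * ((((b:ℕ):ℂ) - ((a:ℕ):ℂ)) / q)
            = (2 * (Real.pi:ℂ) * Complex.I) * n := by
          rw [hn]; ring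
        exact mul_left_cancel₀ h2pi this
      have hdZ : d = n * q := by
        have h2 : (d:ℂ) = n * q := by
          rw [hd]
          rw [div_eq_iff hqC] at hdq
          exact hdq
        exact_mod_cast h2
      have hq2 : (0:ℤ) < q := by exact_mod_cast hq0
      rcases eq_or_ne n 0 with h | h
      · subst h; simp at hdZ; exact hdZ0 hdZ
      · have : (q:ℤ) ≤ |n * (q:ℤ)| := by
          rw [abs_mul]
          calc (q:ℤ) = 1 * |(q:ℤ)| := by rw [one_mul, abs_of_pos hq2]
          _ ≤ |n| * |(q:ℤ)| := by
              exact mul_le_mul_of_nonneg_right (Int.one_le_abs h) (abs_nonneg _)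
        rw [← hdZ] at this
        linarith [hdabs]
    have hωq : ω ^ q = 1 := by
      rw [hω, ← Complex.exp_nat_mul]
      have harg : ((q:ℕ):ℂ) * (2 * Real.pi * Complex.I * ((((b:ℕ):ℂ) - ((a:ℕ):ℂ)) / q))
          = (d : ℂ) * (2 * Real.pi * Complex.I) := by
        rw [hd]
        field_simp
      rw [harg, Complex.exp_int_mul_two_pi_mul_I]
    rw [geom_sum_eq hω1, hωq]
    simp
end
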